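/- Fix T ≥ 1. There exists a constant C₄′ > 0, depending only on α, the supremum norms of σ and σ′, and T, such that almost surely, for every 0 ≤ ℓ ≤ ⌊NT⌋ and every i ≤ N, |B_{ℓ,w}^N(θ_ℓ^i)| ≤ C₄′·( |Y_ℓ| + (1/N)Σ_{j≤N}|c_0^j| + Ȳ_N )·|X_ℓ|·|c_ℓ^i|, where Ȳ_N = (1/N)Σ_{0≤ℓ′<⌊NT⌋}|Y_{ℓ′}|. -/

import Mathlib

/-! The residual `Y_ℓ - g(X_ℓ, θ_ℓ)` is at most `|Y_ℓ| + ‖σ‖_∞ a_ℓ` in absolute value, where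
`a_k = ⟨|c|, ν_k^N⟩` is the mean absolute outer weight, so everything reduces to controlling `a_ℓ`.
The SGD step for the outer weights gives `a_{k+1} ≤ (1 + α‖σ‖²/N) a_k + (α‖σ‖/N) |Y_k|`, and the
discrete Grönwall inequality turns this into `a_ℓ ≤ e^{α‖σ‖²T} (1 + α‖σ‖) (a_0 + Ȳ_N)` for
`ℓ ≤ NT`. The estimate is pathwise, so it holds for every `ω`, not just almost surely. -/

open MeasureTheory ProbabilityTheory Filter Finset

noncomputable section

/-- Output `g(x, θ)` of the single-layer perceptron with `N` hidden neurons. -/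
def net {d N : ℕ} (σ : ℝ → ℝ) (x : Fin d → ℝ) (cv : Fin N → ℝ) (wv : Fin N → Fin d → ℝ) : ℝ :=
  (N : ℝ)⁻¹ * ∑ i, cv i * σ (∑ m, x m * wv i m)

/-- The SGD recursion with learning rate `α / N`, activation `σ`, pruning sets `ξ`,
training data `(X_k, Y_k)` and iterates `(c_k^i, w_k^i)`. -/
def IsSGD {Ω : Type} {d N : ℕ} (α : ℝ) (σ : ℝ → ℝ) (ξ : Fin N → Fin d → Bool)
    (X : ℕ → Ω → Fin d → ℝ) (Y : ℕ → Ω → ℝ)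
    (c : ℕ → Fin N → Ω → ℝ) (w : ℕ → Fin N → Ω → Fin d → ℝ) : Prop :=
  ∀ k i ω,
    c (k + 1) i ω = c k i ω + (N : ℝ)⁻¹ *
        (α * (Y k ω - net σ (X k ω) (fun j => c k j ω) (fun j => w k j ω)) *
          σ (∑ m, X k ω m * w k i ω m)) ∧
    ∀ m, w (k + 1) i ω m = w k i ω m + (N : ℝ)⁻¹ *
        (α * (Y k ω - net σ (X k ω) (fun j => c k j ω) (fun j => w k j ω)) * c k i ω *
          deriv σ (∑ m', X k ω m' * w k i ω m') * (if ξ i m then X k ω m else 0))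

/-- The training data `{(X_k, Y_k)}_{k ≥ 0}` is an iid sequence. -/
def DataIID {Ω : Type} [MeasurableSpace Ω] {d : ℕ} (P : Measure Ω)
    (X : ℕ → Ω → Fin d → ℝ) (Y : ℕ → Ω → ℝ) : Prop :=
  (∀ k, Measurable fun ω => (X k ω, Y k ω)) ∧
  iIndepFun (fun k ω => (X k ω, Y k ω)) P ∧
  ∀ k, IdentDistrib (fun ω => (X k ω, Y k ω)) (fun ω => (X 0 ω, Y 0 ω)) P P

def meanAbs {N : ℕ} (v : Fin N → ℝ) : ℝ := (N : ℝ)⁻¹ * ∑ j, |v j|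

lemma meanAbs_nonneg {N : ℕ} (v : Fin N → ℝ) : 0 ≤ meanAbs v := by
  unfold meanAbs; positivity

lemma meanAbs_le_add_of_abs_le_add {N : ℕ} {u v : Fin N → ℝ} {r : ℝ} (hr : 0 ≤ r)
    (h : ∀ j, |u j| ≤ |v j| + r) : meanAbs u ≤ meanAbs v + r := by
  rcases N.eq_zero_or_pos with rfl | hN
  · simpa [meanAbs] using hr
  calc meanAbs u ≤ (N : ℝ)⁻¹ * ∑ j, (|v j| + r) := by
        unfold meanAbs; gcongr with j; exact h j
    _ = meanAbs v + r := by
        rw [sum_add_distrib, sum_const, card_univ, Fintype.card_fin, nsmul_eq_mul, meanAbs]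
        field_simp

lemma abs_net_le {d N : ℕ} {σ : ℝ → ℝ} {Kσ : ℝ} (hσ : ∀ s, |σ s| ≤ Kσ)
    (x : Fin d → ℝ) (cv : Fin N → ℝ) (wv : Fin N → Fin d → ℝ) :
    |net σ x cv wv| ≤ Kσ * meanAbs cv := by
  calc |net σ x cv wv| ≤ (N : ℝ)⁻¹ * ∑ i, |cv i| * Kσ := by
        rw [net, abs_mul, abs_inv, Nat.abs_cast]
        gcongr
        refine (abs_sum_le_sum_abs _ _).trans (sum_le_sum fun i _ => ?_)
        rw [abs_mul]
        gcongr
        exact hσ _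
    _ = Kσ * meanAbs cv := by rw [meanAbs, ← sum_mul]; ring

lemma abs_mul_sub_net_le {d N : ℕ} {σ : ℝ → ℝ} {α Kσ : ℝ} (hα : 0 ≤ α)
    (hσ : ∀ s, |σ s| ≤ Kσ) (y : ℝ) (x : Fin d → ℝ) (cv : Fin N → ℝ)
    (wv : Fin N → Fin d → ℝ) :
    |α * (y - net σ x cv wv)| ≤ α * (|y| + Kσ * meanAbs cv) := by
  rw [abs_mul, abs_of_nonneg hα]
  gcongr
  exact (abs_sub _ _).trans (add_le_add_right (abs_net_le hσ x cv wv) _)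

lemma abs_weight_drift_le {d N : ℕ} {σ : ℝ → ℝ} {α Kσ Kσ' : ℝ} (hα : 0 ≤ α)
    (hσ : ∀ s, |σ s| ≤ Kσ) (hσ' : ∀ s, |deriv σ s| ≤ Kσ') (y : ℝ) (x : Fin d → ℝ)
    (cv : Fin N → ℝ) (wv : Fin N → Fin d → ℝ) (ci z : ℝ) :
    |α * (y - net σ x cv wv) * ci * deriv σ z| ≤ α * (|y| + Kσ * meanAbs cv) * Kσ' * |ci| := by
  have hres := abs_mul_sub_net_le hα hσ y x cv wv
  rw [abs_mul, abs_mul, mul_right_comm]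
  exact mul_le_mul_of_nonneg_right
    (mul_le_mul hres (hσ' z) (abs_nonneg _) ((abs_nonneg _).trans hres)) (abs_nonneg ci)

lemma sqrt_sum_sq_mul_ite_le {ι : Type*} [Fintype ι] (a : ℝ) (p : ι → Bool) (x : ι → ℝ) :
    √(∑ m, (a * if p m then x m else 0) ^ 2) ≤ |a| * √(∑ m, x m ^ 2) := by
  calc √(∑ m, (a * if p m then x m else 0) ^ 2)
        = √(a ^ 2 * ∑ m, (if p m then x m else 0) ^ 2) := by simp_rw [mul_sum, mul_pow]
    _ ≤ √(a ^ 2 * ∑ m, x m ^ 2) := by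
        refine Real.sqrt_le_sqrt
          (mul_le_mul_of_nonneg_left (sum_le_sum fun m _ => ?_) (sq_nonneg a))
        split_ifs
        · exact le_rfl
        · simp [sq_nonneg]
    _ = |a| * √(∑ m, x m ^ 2) := by rw [Real.sqrt_mul (sq_nonneg a), Real.sqrt_sq_eq_abs]

section SGD

variable {Ω : Type} {d N : ℕ} {α Kσ : ℝ} {σ : ℝ → ℝ} {ξ : Fin N → Fin d → Bool}
  {X : ℕ → Ω → Fin d → ℝ} {Y : ℕ → Ω → ℝ} {c : ℕ → Fin N → Ω → ℝ}
  {w : ℕ → Fin N → Ω → Fin d → ℝ}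

lemma IsSGD.meanAbs_succ_le (hSGD : IsSGD α σ ξ X Y c w) (hα : 0 ≤ α)
    (hσ : ∀ s, |σ s| ≤ Kσ) (k : ℕ) (ω : Ω) :
    meanAbs (c (k + 1) · ω)
      ≤ (1 + α * Kσ ^ 2 / N) * meanAbs (c k · ω) + α * Kσ / N * |Y k ω| := by
  have hKσ : 0 ≤ Kσ := (abs_nonneg _).trans (hσ 0)
  have hstep : ∀ j, |c (k + 1) j ω|
      ≤ |c k j ω| + α * Kσ / N * (|Y k ω| + Kσ * meanAbs (c k · ω)) := by
    intro j
    rw [(hSGD k j ω).1]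
    refine (abs_add_le _ _).trans (add_le_add_right ?_ _)
    rw [abs_mul, abs_mul, abs_inv, Nat.abs_cast]
    calc _ ≤ (N : ℝ)⁻¹ * (α * (|Y k ω| + Kσ * meanAbs (c k · ω)) * Kσ) := by
          have hres := abs_mul_sub_net_le hα hσ (Y k ω) (X k ω) (c k · ω) (w k · ω)
          exact mul_le_mul_of_nonneg_left
            (mul_le_mul hres (hσ _) (abs_nonneg _) ((abs_nonneg _).trans hres)) (by positivity)
      _ = _ := by ring
  calc meanAbs (c (k + 1) · ω)
      ≤ meanAbs (c k · ω) + α * Kσ / N * (|Y k ω| + Kσ * meanAbs (c k · ω)) :=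
        meanAbs_le_add_of_abs_le_add (by have := meanAbs_nonneg (c k · ω); positivity) hstep
    _ = _ := by ring

lemma IsSGD.meanAbs_le (hSGD : IsSGD α σ ξ X Y c w) (hα : 0 ≤ α)
    (hσ : ∀ s, |σ s| ≤ Kσ) {T : ℝ} (hT : 0 ≤ T) {ℓ : ℕ} (hℓ : ℓ ≤ ⌊(N : ℝ) * T⌋₊) (ω : Ω) :
    meanAbs (c ℓ · ω) ≤ Real.exp (α * Kσ ^ 2 * T) * (1 + α * Kσ) *
      (meanAbs (c 0 · ω) + (N : ℝ)⁻¹ * ∑ ℓ' ∈ range ⌊(N : ℝ) * T⌋₊, |Y ℓ' ω|) := by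
  have hKσ : 0 ≤ Kσ := (abs_nonneg _).trans (hσ 0)
  set Ybar := (N : ℝ)⁻¹ * ∑ ℓ' ∈ range ⌊(N : ℝ) * T⌋₊, |Y ℓ' ω|
  have hYbar : 0 ≤ Ybar := by positivity
  have hℓT : (ℓ : ℝ) ≤ N * T :=
    (Nat.cast_le.mpr hℓ).trans (Nat.floor_le (mul_nonneg N.cast_nonneg hT))
  have hdrift : ∑ k ∈ Ico 0 ℓ, α * Kσ / N * |Y k ω| ≤ α * Kσ * Ybar := by
    rw [← mul_sum, ← range_eq_Ico, div_eq_mul_inv, mul_assoc]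
    gcongr
    exact mul_le_mul_of_nonneg_left (sum_le_sum_of_subset_of_nonneg
      (range_subset_range.mpr hℓ) fun k _ _ => abs_nonneg (Y k ω)) (by positivity)
  have hgrowth : ∑ _k ∈ Ico 0 ℓ, α * Kσ ^ 2 / N ≤ α * Kσ ^ 2 * T := by
    rw [sum_const, Nat.card_Ico, nsmul_eq_mul, Nat.sub_zero, mul_div_left_comm]
    gcongr
    exact div_le_of_le_mul₀ N.cast_nonneg hT (by linarith)
  have hA := meanAbs_nonneg (c 0 · ω)
  calc meanAbs (c ℓ · ω)
      ≤ (meanAbs (c 0 · ω) + ∑ k ∈ Ico 0 ℓ, α * Kσ / N * |Y k ω|) *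
          Real.exp (∑ _k ∈ Ico 0 ℓ, α * Kσ ^ 2 / N) :=
        discrete_gronwall (u := fun k => meanAbs (c k · ω)) (c := fun _ => α * Kσ ^ 2 / N)
          (b := fun k => α * Kσ / N * |Y k ω|) (meanAbs_nonneg _)
          (fun k _ => hSGD.meanAbs_succ_le hα hσ k ω)
          (fun _ _ => by positivity) (fun _ _ => by positivity) ℓ.zero_le
    _ ≤ (meanAbs (c 0 · ω) + α * Kσ * Ybar) * Real.exp (α * Kσ ^ 2 * T) := by gcongr
    _ ≤ ((1 + α * Kσ) * (meanAbs (c 0 · ω) + Ybar)) * Real.exp (α * Kσ ^ 2 * T) := by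
        gcongr
        nlinarith [mul_nonneg (mul_nonneg hα hKσ) hA]
    _ = _ := by ring

end SGD

/-- Fix `T ≥ 1`.  There exists a constant `C₄' > 0`, depending only on `α`, the supremum
norms of `σ` and `σ'`, and `T`, such that almost surely, for every `0 ≤ ℓ ≤ ⌊NT⌋` and
every `i ≤ N`, `|B_{ℓ,w}^N(θ_ℓ^i)| ≤ C₄'·(|Y_ℓ| + (1/N)Σ_j |c_0^j| + Ȳ_N)·|X_ℓ|·|c_ℓ^i|`,
where `Ȳ_N = (1/N)Σ_{ℓ' < ⌊NT⌋}|Y_{ℓ'}|`. -/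
theorem Bw_bound (α Kσ Kσ' T : ℝ) (hα : 0 < α) (hT : 1 ≤ T) :
    ∃ C₄' > (0 : ℝ),
      ∀ (d N : ℕ), 1 ≤ d → 1 ≤ N →
      ∀ σ : ℝ → ℝ, ContDiff ℝ 2 σ → (∀ s, |σ s| ≤ Kσ) → (∀ s, |deriv σ s| ≤ Kσ') →
        (∃ K'', ∀ s, |deriv (deriv σ) s| ≤ K'') →
      ∀ (𝒞 : Finset (Fin d → Bool)) (ξ : Fin N → Fin d → Bool), (∀ i, ξ i ∈ 𝒞) →
      ∀ (Ω : Type) (_ : MeasurableSpace Ω) (P : Measure Ω), IsProbabilityMeasure P →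
      ∀ (X : ℕ → Ω → Fin d → ℝ) (Y : ℕ → Ω → ℝ)
        (c : ℕ → Fin N → Ω → ℝ) (w : ℕ → Fin N → Ω → Fin d → ℝ),
        DataIID P X Y →
        Measurable (fun ω => fun i : Fin N => (c 0 i ω, w 0 i ω)) →
        IndepFun (fun ω => fun i : Fin N => (c 0 i ω, w 0 i ω))
          (fun ω => fun k : ℕ => (X k ω, Y k ω)) P →
        IsSGD α σ ξ X Y c w →
        ∀ᵐ ω ∂P, ∀ ℓ ≤ ⌊(N : ℝ) * T⌋₊, ∀ i : Fin N,
          Real.sqrt (∑ m,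
              (α * (Y ℓ ω - net σ (X ℓ ω) (fun j => c ℓ j ω) (fun j => w ℓ j ω)) * c ℓ i ω *
                deriv σ (∑ m', X ℓ ω m' * w ℓ i ω m') *
                  (if ξ i m then X ℓ ω m else 0)) ^ 2)
            ≤ C₄' * (|Y ℓ ω| + (N : ℝ)⁻¹ * ∑ j, |c 0 j ω|
                  + (N : ℝ)⁻¹ * ∑ ℓ' ∈ Finset.range ⌊(N : ℝ) * T⌋₊, |Y ℓ' ω|)
                * Real.sqrt (∑ m, (X ℓ ω m) ^ 2) * |c ℓ i ω| := by
  set M := Real.exp (α * Kσ ^ 2 * T) * (1 + α * Kσ)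
  refine ⟨max (α * Kσ' * (1 + Kσ * M)) 1, lt_max_of_lt_right one_pos, ?_⟩
  intro d N _ _ σ _ hσ hσ' _ _ ξ _ Ω _ P _ X Y c w _ _ _ hSGD
  refine Eventually.of_forall fun ω ℓ hℓ i => ?_
  have hKσ : 0 ≤ Kσ := (abs_nonneg _).trans (hσ 0)
  have hKσ' : 0 ≤ Kσ' := (abs_nonneg _).trans (hσ' 0)
  set A := (N : ℝ)⁻¹ * ∑ j, |c 0 j ω|
  set Ybar := (N : ℝ)⁻¹ * ∑ ℓ' ∈ range ⌊(N : ℝ) * T⌋₊, |Y ℓ' ω|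
  have hmean : meanAbs (c ℓ · ω) ≤ M * (A + Ybar) := hSGD.meanAbs_le hα.le hσ (by linarith) hℓ ω
  have hA : 0 ≤ A := meanAbs_nonneg (c 0 · ω)
  have hYbar : 0 ≤ Ybar := by positivity
  have hcoef : α * (|Y ℓ ω| + Kσ * meanAbs (c ℓ · ω)) * Kσ'
      ≤ max (α * Kσ' * (1 + Kσ * M)) 1 * (|Y ℓ ω| + A + Ybar) :=
    calc α * (|Y ℓ ω| + Kσ * meanAbs (c ℓ · ω)) * Kσ'
        ≤ α * Kσ' * (|Y ℓ ω| + Kσ * (M * (A + Ybar))) := by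
          rw [mul_right_comm]; gcongr
      _ ≤ α * Kσ' * (1 + Kσ * M) * (|Y ℓ ω| + A + Ybar) := by
          rw [mul_assoc _ (1 + Kσ * M)]
          gcongr
          nlinarith [mul_nonneg (mul_nonneg hKσ (by positivity : 0 ≤ M)) (abs_nonneg (Y ℓ ω))]
      _ ≤ _ := by gcongr; exact le_max_left _ _
  refine (sqrt_sum_sq_mul_ite_le _ _ _).trans ?_
  refine (mul_le_mul_of_nonneg_right (abs_weight_drift_le hα.le hσ hσ' _ _ _ _ _ _)
    (Real.sqrt_nonneg _)).trans ?_
  calc _ = α * (|Y ℓ ω| + Kσ * meanAbs (c ℓ · ω)) * Kσ' * (√(∑ m, X ℓ ω m ^ 2) * |c ℓ i ω|) := by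
        ring
    _ ≤ max (α * Kσ' * (1 + Kσ * M)) 1 * (|Y ℓ ω| + A + Ybar)
          * (√(∑ m, X ℓ ω m ^ 2) * |c ℓ i ω|) := by gcongr
    _ = _ := by ring

end
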